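/- For t > 0, the measure ν_t with density exp(−(u−1)²/(2tu))/√(2πtu) on (0,∞) equals the convolution γ_t * D_t μ_{1/t}, where γ_t is the gamma distribution with density exp(−u/(2t))/√(2πtu) on (0,∞) (shape 1/2, scale 2t) and D_t μ_{1/t} is the dilation by t of the inverse Gaussian measure μ_{1/t}, having density exp(−(u−1)²/(2tu))/√(2πtu³) on (0,∞). -/

import Mathlib

open Real MeasureTheory

/-- The inverse Gaussian density with both parameters equal to `s`, extended by `0`
outside `(0, ∞)`. -/
noncomputable def ρ (s u : ℝ) : ℝ :=
  if 0 < u then s * Real.exp (-(u - s) ^ 2 / (2 * u)) / Real.sqrt (2 * π * u ^ 3) else 0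

/-- The inverse Gaussian measure `μ_s = ρ_s(u) du`. -/
noncomputable def μ (s : ℝ) : Measure ℝ :=
  volume.withDensity fun u => ENNReal.ofReal (ρ s u)

/-- The measure `ν_t` whose moments are the Bessel polynomials `y_n(t)`. -/
noncomputable def ν (t : ℝ) : Measure ℝ :=
  volume.withDensity fun u =>
    ENNReal.ofReal
      (if 0 < u then Real.exp (-(u - 1) ^ 2 / (2 * t * u)) / Real.sqrt (2 * π * t * u) else 0)

/-- The gamma distribution with shape `1/2` and scale `2t`. -/
noncomputable def γmeas (t : ℝ) : Measure ℝ :=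
  volume.withDensity fun u =>
    ENNReal.ofReal (if 0 < u then Real.exp (-u / (2 * t)) / Real.sqrt (2 * π * t * u) else 0)


/-!
The dilation `D_t μ_{1/t}` has density `h_t(v) = exp (-(v - 1)² / (2tv)) / √(2πtv³)` on `(0, ∞)`,
so the convolution has density `u ↦ ∫₀ᵘ γ_t(x) h_t(u - x) dx`, where `γ_t` is the gamma density.
The substitution `w = x / (u (u - x))` maps `(0, u)` onto `(0, ∞)` with `dw = dx / (u - x)²`, and
`γ_t(x) h_t(u - x) = (u - x)⁻² · n_t(u) · γ_t(w)`, where `n_t` is the density of `ν_t`: the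
exponents agree because `x + (v - 1)² / v = (u - 1)² / u + w` for `v = u - x`. Since `γ_t` is a
probability density, the convolution integral equals `n_t(u)`.
-/

open Set
open scoped ENNReal

noncomputable def gammaHalfDensity (t x : ℝ) : ℝ :=
  if 0 < x then Real.exp (-x / (2 * t)) / Real.sqrt (2 * π * t * x) else 0

noncomputable def dilatedInvGaussDensity (t v : ℝ) : ℝ :=
  if 0 < v then Real.exp (-(v - 1) ^ 2 / (2 * t * v)) / Real.sqrt (2 * π * t * v ^ 3) else 0

noncomputable def besselDensity (t u : ℝ) : ℝ :=
  if 0 < u then Real.exp (-(u - 1) ^ 2 / (2 * t * u)) / Real.sqrt (2 * π * t * u) else 0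

theorem measurable_gammaHalfDensity (t : ℝ) : Measurable (gammaHalfDensity t) :=
  Measurable.ite measurableSet_Ioi (by fun_prop) measurable_const

theorem measurable_dilatedInvGaussDensity (t : ℝ) : Measurable (dilatedInvGaussDensity t) :=
  Measurable.ite measurableSet_Ioi (by fun_prop) measurable_const

theorem map_const_mul_withDensity {a : ℝ} (ha : a ≠ 0) {g : ℝ → ℝ≥0∞} (hg : Measurable g) :
    (volume.withDensity g).map (a * ·) =
      volume.withDensity fun v => ENNReal.ofReal |a⁻¹| * g (a⁻¹ * v) := by
  refine Measure.ext_of_lintegral _ fun φ hφ => ?_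
  have hH : Measurable fun v => g (a⁻¹ * v) * φ v := (hg.comp (by fun_prop)).mul hφ
  rw [lintegral_map hφ (by fun_prop), lintegral_withDensity_eq_lintegral_mul _ hg (by fun_prop),
    lintegral_withDensity_eq_lintegral_mul _ (by fun_prop) hφ]
  calc ∫⁻ y, (g * fun y => φ (a * y)) y
      = ∫⁻ y, (fun v => g (a⁻¹ * v) * φ v) (a * y) := by
        simp only [Pi.mul_apply, inv_mul_cancel_left₀ ha]
    _ = ∫⁻ v, g (a⁻¹ * v) * φ v ∂(volume.map (a * ·)) := (lintegral_map hH (by fun_prop)).symm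
    _ = _ := by
      rw [Real.map_volume_mul_left ha, lintegral_smul_measure, smul_eq_mul,
        ← lintegral_const_mul _ hH]
      simp only [Pi.mul_apply, mul_assoc]

theorem dilatedInvGaussDensity_eq {t : ℝ} (ht : 0 < t) (v : ℝ) :
    dilatedInvGaussDensity t v = t⁻¹ * ρ (1 / t) (t⁻¹ * v) := by
  unfold dilatedInvGaussDensity ρ
  rcases lt_or_ge 0 v with hv | hv
  · rw [if_pos hv, if_pos (by positivity)]
    have hexp : -(t⁻¹ * v - 1 / t) ^ 2 / (2 * (t⁻¹ * v)) = -(v - 1) ^ 2 / (2 * t * v) := by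
      field_simp
    have hsqrt : √(2 * π * (t⁻¹ * v) ^ 3) = √(2 * π * t * v ^ 3) / t ^ 2 := by
      rw [show 2 * π * (t⁻¹ * v) ^ 3 = 2 * π * t * v ^ 3 / (t ^ 2) ^ 2 by field_simp,
        Real.sqrt_div' _ (by positivity), Real.sqrt_sq (by positivity)]
    rw [hexp, hsqrt]
    field_simp
  · rw [if_neg hv.not_gt, if_neg (mul_nonpos_of_nonneg_of_nonpos (inv_pos.2 ht).le hv).not_gt,
      mul_zero]

theorem map_const_mul_μ_one_div {t : ℝ} (ht : 0 < t) :
    (μ (1 / t)).map (t * ·) =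
      volume.withDensity fun v => ENNReal.ofReal (dilatedInvGaussDensity t v) := by
  have hρ : Measurable fun u => ENNReal.ofReal (ρ (1 / t) u) :=
    (Measurable.ite measurableSet_Ioi (by fun_prop) measurable_const).ennreal_ofReal
  rw [μ, map_const_mul_withDensity ht.ne' hρ]
  congr with v
  rw [dilatedInvGaussDensity_eq ht, abs_of_pos (inv_pos.2 ht), ENNReal.ofReal_mul (inv_pos.2 ht).le]

theorem gammaPDF_eq_ofReal_gammaHalfDensity {t : ℝ} (ht : 0 < t) (x : ℝ) :
    ProbabilityTheory.gammaPDF (1 / 2) (2 * t)⁻¹ x = ENNReal.ofReal (gammaHalfDensity t x) := by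
  rw [ProbabilityTheory.gammaPDF, ProbabilityTheory.gammaPDFReal, gammaHalfDensity,
    Real.Gamma_one_half_eq]
  congr 1
  rcases lt_trichotomy 0 x with hx | rfl | hx
  · rw [if_pos hx.le, if_pos hx, show (1 / 2 : ℝ) - 1 = -(1 / 2) by norm_num,
      Real.rpow_neg hx.le, ← Real.sqrt_eq_rpow, ← Real.sqrt_eq_rpow,
      show 2 * π * t * x = π * (2 * t) * x by ring, Real.sqrt_mul (by positivity),
      Real.sqrt_mul (by positivity), Real.sqrt_inv]
    have := Real.sqrt_pos.2 hx
    have := Real.sqrt_pos.2 ht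
    field_simp
  · rw [if_pos le_rfl, if_neg (lt_irrefl 0), Real.zero_rpow (by norm_num), mul_zero, zero_mul]
  · rw [if_neg hx.not_ge, if_neg hx.not_gt]

theorem setLIntegral_Ioi_gammaHalfDensity {t : ℝ} (ht : 0 < t) :
    ∫⁻ x in Ioi 0, ENNReal.ofReal (gammaHalfDensity t x) = 1 := by
  rw [setLIntegral_eq_of_support_subset]
  · simp_rw [← gammaPDF_eq_ofReal_gammaHalfDensity ht]
    exact ProbabilityTheory.lintegral_gammaPDF_eq_one (by norm_num) (by positivity)
  refine Function.support_subset_iff'.2 fun x (hx : ¬ 0 < x) => ?_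
  simp only [gammaHalfDensity, if_neg hx, ENNReal.ofReal_zero]

theorem image_div_mul_sub_Ioo {u : ℝ} (hu : 0 < u) :
    (fun x => x / (u * (u - x))) '' Ioo 0 u = Ioi 0 := by
  ext w
  constructor
  · rintro ⟨x, ⟨hx, hxu⟩, rfl⟩
    have : 0 < u - x := sub_pos.2 hxu
    exact div_pos hx (by positivity)
  · intro (hw : 0 < w)
    have hq : 0 < u * w + 1 := by positivity
    refine ⟨u ^ 2 * w / (u * w + 1), ⟨by positivity, ?_⟩, ?_⟩
    · rw [div_lt_iff₀ hq]
      nlinarith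
    · have : u - u ^ 2 * w / (u * w + 1) = u / (u * w + 1) := by
        field_simp
        ring
      simp only [this]
      field_simp

theorem setLIntegral_Ioi_eq_setLIntegral_Ioo {u : ℝ} (hu : 0 < u) (G : ℝ → ℝ≥0∞) :
    ∫⁻ w in Ioi 0, G w =
      ∫⁻ x in Ioo 0 u, ENNReal.ofReal ((u - x)⁻¹ ^ 2) * G (x / (u * (u - x))) := by
  have hderiv : ∀ x ∈ Ioo 0 u,
      HasDerivWithinAt (fun x => x / (u * (u - x))) ((u - x)⁻¹ ^ 2) (Ioo 0 u) x := by
    rintro x ⟨-, hxu⟩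
    have : u - x ≠ 0 := (sub_pos.2 hxu).ne'
    refine (((hasDerivAt_id x).div (((hasDerivAt_id x).const_sub u).const_mul u)
      (by positivity)).congr_deriv ?_).hasDerivWithinAt
    simp only [id]
    field_simp
    ring
  have hmono : MonotoneOn (fun x => x / (u * (u - x))) (Ioo 0 u) := by
    rintro a ⟨ha, hau⟩ b ⟨-, hbu⟩ hab
    have : 0 < u - a := sub_pos.2 hau
    have : 0 < u - b := sub_pos.2 hbu
    rw [div_le_div_iff₀ (by positivity) (by positivity)]
    nlinarith [mul_le_mul_of_nonneg_left hab (sq_nonneg u)]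
  rw [← image_div_mul_sub_Ioo hu,
    lintegral_image_eq_lintegral_deriv_mul_of_monotoneOn measurableSet_Ioo hderiv hmono]

theorem gammaHalfDensity_mul_dilatedInvGaussDensity {t x u : ℝ} (ht : 0 < t) (hx : 0 < x)
    (hxu : x < u) :
    gammaHalfDensity t x * dilatedInvGaussDensity t (u - x) =
      (u - x)⁻¹ ^ 2 * (besselDensity t u * gammaHalfDensity t (x / (u * (u - x)))) := by
  have hu : 0 < u := hx.trans hxu
  set v := u - x with hv
  have hv0 : 0 < v := sub_pos.2 hxu
  set w := x / (u * v) with hw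
  have hw0 : 0 < w := by positivity
  unfold gammaHalfDensity dilatedInvGaussDensity besselDensity
  rw [if_pos hx, if_pos hv0, if_pos hu, if_pos hw0]
  have hexp : -x / (2 * t) + -(v - 1) ^ 2 / (2 * t * v) =
      -(u - 1) ^ 2 / (2 * t * u) + -w / (2 * t) := by
    have hux : u = x + v := by rw [hv]; ring
    rw [hw, hux]
    field_simp
    ring
  have hsqrt : √(2 * π * t * x) * √(2 * π * t * v ^ 3) =
      v ^ 2 * (√(2 * π * t * u) * √(2 * π * t * w)) := by
    rw [← Real.sqrt_mul (by positivity), ← Real.sqrt_mul (by positivity),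
      ← Real.sqrt_sq (by positivity : (0 : ℝ) ≤ v ^ 2), ← Real.sqrt_mul (by positivity)]
    congr 1
    rw [hw]
    field_simp
  have : 0 < √(2 * π * t * u) := by positivity
  have : 0 < √(2 * π * t * w) := by positivity
  calc _ = Real.exp (-x / (2 * t) + -(v - 1) ^ 2 / (2 * t * v)) /
        (√(2 * π * t * x) * √(2 * π * t * v ^ 3)) := by
        rw [Real.exp_add, mul_div_mul_comm]
    _ = _ := by
        rw [hexp, hsqrt, Real.exp_add]
        field_simp

theorem gammaHalfDensity_mul_dilatedInvGaussDensity_of_notMem {t x u : ℝ} (hx : x ∉ Ioo 0 u) :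
    gammaHalfDensity t x * dilatedInvGaussDensity t (u - x) = 0 := by
  rcases le_or_gt x 0 with hx0 | hx0
  · rw [gammaHalfDensity, if_neg hx0.not_gt, zero_mul]
  · have : ¬ 0 < u - x := fun h => hx ⟨hx0, sub_pos.1 h⟩
    rw [dilatedInvGaussDensity, if_neg this, mul_zero]

theorem lconvolution_gammaHalfDensity_dilatedInvGaussDensity {t : ℝ} (ht : 0 < t) (u : ℝ) :
    ((fun x => ENNReal.ofReal (gammaHalfDensity t x)) ⋆ₗ
      fun v => ENNReal.ofReal (dilatedInvGaussDensity t v)) u =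
      ENNReal.ofReal (besselDensity t u) := by
  have hsupp : ((fun x => ENNReal.ofReal (gammaHalfDensity t x)) ⋆ₗ
      fun v => ENNReal.ofReal (dilatedInvGaussDensity t v)) u =
      ∫⁻ x in Ioo 0 u, ENNReal.ofReal (gammaHalfDensity t x * dilatedInvGaussDensity t (u - x)) := by
    rw [setLIntegral_eq_of_support_subset, lconvolution_def]
    · refine lintegral_congr fun x => ?_
      rw [neg_add_eq_sub, ENNReal.ofReal_mul]
      unfold gammaHalfDensity
      split_ifs <;> positivity
    · refine Function.support_subset_iff'.2 fun x hx => ?_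
      rw [gammaHalfDensity_mul_dilatedInvGaussDensity_of_notMem hx, ENNReal.ofReal_zero]
  rw [hsupp]
  rcases le_or_gt u 0 with hu | hu
  · rw [Ioo_eq_empty hu.not_gt, Measure.restrict_empty, lintegral_zero_measure, besselDensity,
      if_neg hu.not_gt, ENNReal.ofReal_zero]
  calc _ = ∫⁻ x in Ioo 0 u, ENNReal.ofReal ((u - x)⁻¹ ^ 2) *
        (ENNReal.ofReal (besselDensity t u) *
          ENNReal.ofReal (gammaHalfDensity t (x / (u * (u - x))))) := by
        refine setLIntegral_congr_fun measurableSet_Ioo fun x ⟨hx, hxu⟩ => ?_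
        rw [gammaHalfDensity_mul_dilatedInvGaussDensity ht hx hxu,
          ENNReal.ofReal_mul (by positivity), ENNReal.ofReal_mul]
        unfold besselDensity
        split_ifs <;> positivity
    _ = ∫⁻ w in Ioi 0, ENNReal.ofReal (besselDensity t u) * ENNReal.ofReal (gammaHalfDensity t w) :=
        (setLIntegral_Ioi_eq_setLIntegral_Ioo hu fun w =>
          ENNReal.ofReal (besselDensity t u) * ENNReal.ofReal (gammaHalfDensity t w)).symm
    _ = ENNReal.ofReal (besselDensity t u) := by
        rw [lintegral_const_mul _ (measurable_gammaHalfDensity t).ennreal_ofReal,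
          setLIntegral_Ioi_gammaHalfDensity ht, mul_one]

theorem stmt_19 (t : ℝ) (ht : 0 < t) :
    ν t = (γmeas t).conv (Measure.map (fun u => t * u) (μ (1 / t))) := by
  have hν : ν t = volume.withDensity fun u => ENNReal.ofReal (besselDensity t u) := rfl
  have hγ : γmeas t = volume.withDensity fun x => ENNReal.ofReal (gammaHalfDensity t x) := rfl
  rw [hν, hγ, map_const_mul_μ_one_div ht, conv_withDensity_eq_lconvolution
    (measurable_gammaHalfDensity t).ennreal_ofReal
    (measurable_dilatedInvGaussDensity t).ennreal_ofReal]
  congr with u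
  exact (lconvolution_gammaHalfDensity_dilatedInvGaussDensity ht u).symm
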